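/- Let H and U be real Banach spaces, A : H → H and B : U → H continuous linear maps. For a locally Bochner-integrable function f : ℝ → U and t ≥ 0, define the input map Φ_t f = ∫₀^t exp((t−s)A) (B (f(s))) ds. For τ ≥ 0 and functions u, v : ℝ → U define the τ-concatenation (u ◇_τ v)(s) = u(s) if s < τ and (u ◇_τ v)(s) = v(s − τ) if s ≥ τ. Then for all 0 ≤ t ≤ T and all locally Bochner-integrable u, v : ℝ → U, Φ_T (u ◇_{T−t} v) = exp(tA) (Φ_{T−t} u) + Φ_t v. -/

import Mathlib

open MeasureTheory

variable {H : Type*} [NormedAddCommGroup H] [NormedSpace ℝ H] [CompleteSpace H]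
variable {U : Type*} [NormedAddCommGroup U] [NormedSpace ℝ U]

/-- The input map `Φ_t f = ∫₀ᵗ exp((t−s)A) (B (f s)) ds`. -/
noncomputable def inputMap (A : H →L[ℝ] H) (B : U →L[ℝ] H) (t : ℝ) (f : ℝ → U) : H :=
  ∫ s in (0:ℝ)..t, NormedSpace.exp ((t - s) • A) (B (f s))

/-- The `τ`-concatenation of two controls: `(u ◇_τ v)(s) = u(s)` for `s < τ` and
`(u ◇_τ v)(s) = v(s − τ)` for `s ≥ τ`. -/
noncomputable def concat (τ : ℝ) (u v : ℝ → U) : ℝ → U := fun s => if s < τ then u s else v (s - τ)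

/-!
Split `[0, T]` at `τ = T - t`. On `[0, τ)` the concatenated control is `u`, and the semigroup law
`exp ((T - s) A) = exp (t A) exp ((τ - s) A)` pulls `exp (t A)` out of the integral. On `[τ, T]` it
is `v (· - τ)`, and the substitution `s ↦ s - τ` turns that piece into `Φ_t v`.
-/

open NormedSpace Set intervalIntegral

instance ContinuousLinearMap.applyIsBoundedSMul {𝕜 E : Type*} [NontriviallyNormedField 𝕜]
    [SeminormedAddCommGroup E] [NormedSpace 𝕜 E] : IsBoundedSMul (E →L[𝕜] E) E :=
  .of_norm_smul_le ContinuousLinearMap.le_opNorm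

theorem NormedSpace.exp_add_smul {𝔸 : Type*} [NormedRing 𝔸] [NormedAlgebra ℝ 𝔸] [CompleteSpace 𝔸]
    (a b : ℝ) (x : 𝔸) : exp ((a + b) • x) = exp (a • x) * exp (b • x) := by
  let +nondep : NormedAlgebra ℚ 𝔸 := .restrictScalars ℚ ℝ 𝔸
  rw [add_smul, exp_add_of_commute (((Commute.refl x).smul_left a).smul_right b)]

theorem MeasureTheory.LocallyIntegrable.intervalIntegrable {E : Type*} [NormedAddCommGroup E]
    {f : ℝ → E} {μ : Measure ℝ} (hf : LocallyIntegrable f μ) (a b : ℝ) :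
    IntervalIntegrable f μ a b :=
  (hf.integrableOn_isCompact isCompact_uIcc).intervalIntegrable

theorem IntervalIntegrable.exp_sub_smul_apply (A : H →L[ℝ] H) (B : U →L[ℝ] H) {f : ℝ → U}
    {a b : ℝ} (hf : IntervalIntegrable f volume a b) (c : ℝ) :
    IntervalIntegrable (fun s => exp ((c - s) • A) (B (f s))) volume a b :=
  have hB : IntervalIntegrable (fun s => B (f s)) volume a b :=
    ⟨B.integrable_comp hf.1, B.integrable_comp hf.2⟩
  have hexp : Continuous fun s : ℝ => exp ((c - s) • A) :=
    (differentiable_exp_smul_const ℝ A).continuous.comp (continuous_const.sub continuous_id)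
  -- `g • x` is `g x` for the evaluation action of `H →L[ℝ] H` on `H`.
  hB.continuousOn_smul hexp.continuousOn

theorem concat_of_lt {V : Type*} {τ s : ℝ} (u v : ℝ → V) (h : s < τ) : concat τ u v s = u s :=
  if_pos h

theorem concat_of_le {V : Type*} {τ s : ℝ} (u v : ℝ → V) (h : τ ≤ s) : concat τ u v s = v (s - τ) :=
  if_neg h.not_gt

theorem exp_smul_apply_inputMap (A : H →L[ℝ] H) (B : U →L[ℝ] H) {f : ℝ → U} {τ : ℝ}
    (hf : IntervalIntegrable f volume 0 τ) (t : ℝ) :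
    exp (t • A) (inputMap A B τ f) = ∫ s in 0..τ, exp ((t + τ - s) • A) (B (f s)) := by
  rw [inputMap, ← (exp (t • A)).intervalIntegral_comp_comm (hf.exp_sub_smul_apply A B τ)]
  refine integral_congr fun s _ => ?_
  rw [add_sub_assoc, exp_add_smul t (τ - s) A]
  rfl

/-- Composition property of input maps under concatenation of controls:
for `0 ≤ t ≤ T`, `Φ_T (u ◇_{T−t} v) = exp(tA) (Φ_{T−t} u) + Φ_t v`. -/
theorem stmt11 (A : H →L[ℝ] H) (B : U →L[ℝ] H) (u v : ℝ → U)
    (hu : MeasureTheory.LocallyIntegrable u MeasureTheory.volume)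
    (hv : MeasureTheory.LocallyIntegrable v MeasureTheory.volume)
    (t T : ℝ) (ht : 0 ≤ t) (htT : t ≤ T) :
    inputMap A B T (concat (T - t) u v) =
      NormedSpace.exp (t • A) (inputMap A B (T - t) u) + inputMap A B t v := by
  obtain ⟨τ, hτ, rfl⟩ : ∃ τ, 0 ≤ τ ∧ T = t + τ := ⟨T - t, sub_nonneg.2 htT, by ring⟩
  rw [add_sub_cancel_left]
  have hleft : EqOn (fun s => exp ((t + τ - s) • A) (B (concat τ u v s)))
      (fun s => exp ((t + τ - s) • A) (B (u s))) (uIoo 0 τ) := fun s hs => by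
    rw [uIoo_of_le hτ] at hs
    dsimp only
    rw [concat_of_lt u v hs.2]
  have hright : EqOn (fun s => exp ((t + τ - s) • A) (B (concat τ u v s)))
      (fun s => exp ((t - (s - τ)) • A) (B (v (s - τ)))) (uIoo τ (t + τ)) := fun s hs => by
    rw [uIoo_of_le (le_add_of_nonneg_left ht)] at hs
    dsimp only
    rw [concat_of_le u v hs.1.le, sub_sub_eq_add_sub]
  have hleftInt :=
    ((hu.intervalIntegrable 0 τ).exp_sub_smul_apply A B (t + τ)).congr_uIoo hleft.symm
  have hrightInt := ((hv.intervalIntegrable 0 t).exp_sub_smul_apply A B t).comp_sub_right τ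
  rw [zero_add] at hrightInt
  rw [inputMap, ← integral_add_adjacent_intervals hleftInt (hrightInt.congr_uIoo hright.symm),
    integral_congr_uIoo hleft, integral_congr_uIoo hright,
    exp_smul_apply_inputMap A B (hu.intervalIntegrable 0 τ),
    integral_comp_sub_right (fun s => exp ((t - s) • A) (B (v s))), sub_self, add_sub_cancel_right]
  rfl
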